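/- Let X be a topological space, Y a metric space, and f : X → Y a Baire-2 function. Then there exists a sequence (G_n)_{n=1}^∞ of Fσ sets in X × Y such that ⋂_{n=1}^∞ G_n = gr(f) and for each x ∈ X the diameter of the vertical section G_n(x) = {y ∈ Y : (x, y) ∈ G_n} tends to 0 as n → ∞. -/

import Mathlib

open Filter Topology

/-- A function is Baire-1 if it is the pointwise limit of a sequence of continuous functions. -/
def BaireOne {X Y : Type*} [TopologicalSpace X] [TopologicalSpace Y] (f : X → Y) : Prop :=
  ∃ g : ℕ → X → Y, (∀ n, Continuous (g n)) ∧
    ∀ x, Filter.Tendsto (fun n => g n x) Filter.atTop (nhds (f x))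

/-- A function is Baire-2 if it is the pointwise limit of a sequence of Baire-1 functions. -/
def BaireTwo {X Y : Type*} [TopologicalSpace X] [TopologicalSpace Y] (f : X → Y) : Prop :=
  ∃ g : ℕ → X → Y, (∀ n, BaireOne (g n)) ∧
    ∀ x, Filter.Tendsto (fun n => g n x) Filter.atTop (nhds (f x))

/-- An Fσ set is a countable union of closed sets. -/
def IsFSigma {Z : Type*} [TopologicalSpace Z] (s : Set Z) : Prop :=
  ∃ F : ℕ → Set Z, (∀ n, IsClosed (F n)) ∧ s = ⋃ n, F n

/-!
Write `f = lim gₘ` with each `gₘ` Baire-1. For a Baire-1 function `g = lim hₖ` with continuous `hₖ`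
and a radius `r`, the set of `(x, y)` with `d(y, hₖ x) ≤ r` for all large `k` is Fσ and lies between
the open and the closed `r`-neighbourhood of the graph of `g`. Taking `Gₙ` to be the union over
`m ≥ n` of these sets for `gₘ` and `r = 1/n`, the section of `Gₙ` above `x` contains `f x` and lies
in the closed `1/n`-neighbourhood of the tail `{gₘ x | m ≥ n}`, so it shrinks to `f x`.
-/

open Metric Set
open scoped ENNReal

theorem IsFSigma.iUnion {Z : Type*} [TopologicalSpace Z] {s : ℕ → Set Z}
    (h : ∀ n, IsFSigma (s n)) : IsFSigma (⋃ n, s n) := by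
  choose F hF hs using h
  refine ⟨fun k => F k.unpair.1 k.unpair.2, fun k => hF _ _, ?_⟩
  rw [Set.iUnion_unpair, iUnion_congr hs]

theorem BaireOne.exists_isFSigma_between {X Y : Type*} [TopologicalSpace X]
    [PseudoEMetricSpace Y] {g : X → Y} (hg : BaireOne g) (r : ℝ≥0∞) :
    ∃ E : Set (X × Y), IsFSigma E ∧
      {p | edist p.2 (g p.1) < r} ⊆ E ∧ E ⊆ {p | edist p.2 (g p.1) ≤ r} := by
  obtain ⟨h, hcont, hlim⟩ := hg
  have hdist (p : X × Y) :
      Tendsto (fun k => edist p.2 (h k p.1)) atTop (𝓝 (edist p.2 (g p.1))) :=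
    tendsto_const_nhds.edist (hlim p.1)
  refine ⟨{p | ∀ᶠ k in atTop, edist p.2 (h k p.1) ≤ r},
    ⟨fun j => {p | ∀ k ≥ j, edist p.2 (h k p.1) ≤ r}, fun j => ?_, ?_⟩,
    fun p hp => ((hdist p).eventually_lt_const hp).mono fun _ => le_of_lt,
    fun p hp => le_of_tendsto (hdist p) hp⟩
  · simp only [ofPred_forall]
    exact isClosed_iInter fun k => isClosed_iInter fun _ =>
      isClosed_le (continuous_snd.edist ((hcont k).comp continuous_fst)) continuous_const
  · ext p
    simp only [eventually_atTop, mem_ofPred_eq, mem_iUnion]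

theorem tendsto_iUnion_closedEBall_smallSets {Y : Type*} [PseudoEMetricSpace Y] {y : ℕ → Y}
    {c : Y} (hy : Tendsto y atTop (𝓝 c)) {r : ℕ → ℝ≥0∞} (hr : Tendsto r atTop (𝓝 0)) :
    Tendsto (fun n => ⋃ m, closedEBall (y (m + n)) (r n)) atTop (𝓝 c).smallSets := by
  rw [nhds_basis_closedEBall.smallSets.tendsto_right_iff]
  intro ε hε
  have hε2 : 0 < ε / 2 := ENNReal.half_pos hε.ne'
  obtain ⟨N, hN⟩ := eventually_atTop.1 (hy.eventually (closedEBall_mem_nhds c hε2))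
  filter_upwards [eventually_ge_atTop N, hr.eventually (eventually_le_nhds hε2)]
    with n hn hrn z hz
  obtain ⟨m, hm⟩ := mem_iUnion.1 hz
  calc edist z c ≤ edist z (y (m + n)) + edist (y (m + n)) c := edist_triangle _ _ _
    _ ≤ ε / 2 + ε / 2 := add_le_add (hm.trans hrn) (hN _ (by omega))
    _ = ε := ENNReal.add_halves ε

theorem Filter.Tendsto.tendsto_ediam_zero {ι Y : Type*} [PseudoEMetricSpace Y]
    {l : Filter ι} {S : ι → Set Y} {c : Y} (h : Tendsto S l (𝓝 c).smallSets) :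
    Tendsto (fun i => ediam (S i)) l (𝓝 0) := by
  rw [ENNReal.tendsto_nhds_zero]
  intro ε hε
  have hε2 : 0 < ε / 2 := ENNReal.half_pos hε.ne'
  filter_upwards [tendsto_smallSets_iff.1 h _ (closedEBall_mem_nhds c hε2)] with i hi
  calc ediam (S i) ≤ ediam (closedEBall c (ε / 2)) := ediam_mono hi
    _ ≤ 2 * (ε / 2) := ediam_closedEBall_le
    _ = ε := ENNReal.mul_div_cancel two_ne_zero ENNReal.ofNat_ne_top

theorem iInter_eq_singleton_of_tendsto_smallSets {ι Y : Type*} [TopologicalSpace Y] [T1Space Y]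
    {l : Filter ι} [l.NeBot] {S : ι → Set Y} {c : Y} (hc : ∀ i, c ∈ S i)
    (h : Tendsto S l (𝓝 c).smallSets) : ⋂ i, S i = {c} := by
  refine subset_antisymm (fun z hz => ?_) (singleton_subset_iff.2 (mem_iInter.2 hc))
  by_contra hzc
  obtain ⟨i, hi⟩ := (tendsto_smallSets_iff.1 h _ (compl_singleton_mem_nhds (Ne.symm hzc))).exists
  exact hi (mem_iInter.1 hz i) rfl

/-- If `X` is a topological space, `Y` a metric space and `f : X → Y` is Baire-2,
then there is a sequence of Fσ sets in `X × Y` whose intersection is the graph of `f` and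
whose vertical sections above each `x` have diameter tending to `0`. -/
theorem baireTwo_graph_fsigma_sets
    {X Y : Type*} [TopologicalSpace X] [MetricSpace Y]
    (f : X → Y) (hf : BaireTwo f) :
    ∃ G : ℕ → Set (X × Y),
      (∀ n, IsFSigma (G n)) ∧
      (⋂ n, G n) = {p : X × Y | p.2 = f p.1} ∧
      (∀ x : X,
        Tendsto (fun n => EMetric.diam {y : Y | (x, y) ∈ G n}) atTop (𝓝 0)) := by
  obtain ⟨g, hg, hlim⟩ := hf
  choose E hE hball hcball using fun m n : ℕ => (hg m).exists_isFSigma_between (n : ℝ≥0∞)⁻¹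
  set G : ℕ → Set (X × Y) := fun n => ⋃ m, E (m + n) n
  have hmem (x : X) (n : ℕ) : f x ∈ {y | (x, y) ∈ G n} := by
    obtain ⟨m, hm⟩ := (((hlim x).comp (tendsto_add_atTop_nat n)).eventually
      (eball_mem_nhds (f x) (ENNReal.inv_pos.2 (ENNReal.natCast_ne_top n)))).exists
    exact mem_iUnion.2 ⟨m, hball _ _ (mem_eball'.1 hm)⟩
  have hsection (x : X) : Tendsto (fun n => {y | (x, y) ∈ G n}) atTop (𝓝 (f x)).smallSets :=
    (tendsto_iUnion_closedEBall_smallSets (hlim x) ENNReal.tendsto_inv_nat_nhds_zero).smallSets_mono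
      (Eventually.of_forall fun n y hy => by
        obtain ⟨m, hm⟩ := mem_iUnion.1 hy
        exact mem_iUnion.2 ⟨m, hcball _ _ hm⟩)
  refine ⟨G, fun n => IsFSigma.iUnion fun m => hE _ _, ?_,
    fun x => (hsection x).tendsto_ediam_zero⟩
  ext ⟨x, y⟩
  simpa using Set.ext_iff.1 (iInter_eq_singleton_of_tendsto_smallSets (hmem x) (hsection x)) y
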